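/- Fix γ > 0. For k ≥ 1 let ψ^(k)(z) = ((1+z)/2)·exp(γ(z−1)/(1+z+1/k)), analytic on a neighborhood of the closed unit disk, and let ψ^∞ have boundary values ψ^∞(e^{−iλ}) = ((1+e^{−iλ})/2)·exp(−iγ·tan(λ/2)) for λ ∈ (−π, π). Then the retailer's inventory variance is continuous along the sequence: lim_{k→∞} (1/2π)∫_{−π}^{π} |(e^{−iλ}ψ^(k)(e^{−iλ}) − 1)/(1 − e^{−iλ})|² dλ = (1/2π)∫_{−π}^{π} |(e^{−iλ}ψ^∞(e^{−iλ}) − 1)/(1 − e^{−iλ})|² dλ, i.e., lim_{k→∞} σ_I²(ψ^(k)) = σ_I²(ψ^∞), and both quantities are finite. -/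

import Mathlib

open MeasureTheory intervalIntegral

/-- The ε-optimal policy `ψ^(k)(z) = ((1+z)/2)·exp(γ(z−1)/(1+z+1/k))`. -/
noncomputable def psiK (γ : ℝ) (k : ℕ) : ℂ → ℂ :=
  fun z => ((1 + z) / 2) * Complex.exp ((γ : ℂ) * (z - 1) / (1 + z + 1 / (k : ℂ)))

/-- Boundary values of the limiting policy `ψ^∞`. -/
noncomputable def psiInfBdy (γ : ℝ) : ℝ → ℂ := fun l =>
  ((1 + Complex.exp (-Complex.I * l)) / 2) *
    Complex.exp (-Complex.I * (γ : ℂ) * (Real.tan (l / 2) : ℂ))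

/-- The inventory-variance integrand of a circle function `F`. -/
noncomputable def invIntegrand (F : ℝ → ℂ) : ℝ → ℝ := fun l =>
  ‖(Complex.exp (-Complex.I * l) * F l - 1) / (1 - Complex.exp (-Complex.I * l))‖ ^ 2

/-- Inventory variance of a function on the unit circle. -/
noncomputable def sigmaI2c (F : ℝ → ℂ) : ℝ :=
  (1 / (2 * Real.pi)) * ∫ l in (-Real.pi)..Real.pi, invIntegrand F l

/-! Both policies are, on the unit circle, of the form
`ψ_r(z) = ((1 + z)/2) · exp(γ(z − 1)/(1 + z + r))`, with `r = 1/k` for `ψ^(k)` and `r = 0` for `ψ^∞`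
(since `−i tan(λ/2) = (z − 1)/(z + 1)` at `z = e^{−iλ}`). For `r ≥ 0` and `|z| = 1` the exponent has
nonpositive real part and `|1 + z| ≤ |1 + z + r|`, so `|ψ_r(z) − 1| ≤ (γ + 1/2)|z − 1|` and all the
integrands are bounded by `(γ + 3/2)²`. As `ψ_r(z) → ψ_0(z)` for every `z` (trivially at `z = −1`),
dominated convergence gives the limit. -/

open Filter Topology

lemma Complex.norm_exp_sub_one_le_of_re_nonpos {w : ℂ} (hw : w.re ≤ 0) :
    ‖Complex.exp w - 1‖ ≤ 2 * ‖w‖ := by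
  rcases le_or_gt ‖w‖ 1 with h | h
  · exact Complex.norm_exp_sub_one_le h
  · calc ‖Complex.exp w - 1‖ ≤ ‖Complex.exp w‖ + ‖(1 : ℂ)‖ := norm_sub_le _ _
      _ ≤ 1 + 1 := by
        rw [Complex.norm_exp, norm_one]
        gcongr
        exact Real.exp_le_one_iff.2 hw
      _ ≤ 2 * ‖w‖ := by linarith

lemma norm_exp_neg_I_mul (l : ℝ) : ‖Complex.exp (-Complex.I * l)‖ = 1 := by
  rw [Complex.norm_exp]
  simp

lemma sq_norm_div_one_sub_le {z ψ : ℂ} {C : ℝ} (hz : ‖z‖ = 1) (h : ‖ψ - 1‖ ≤ C * ‖z - 1‖) :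
    ‖(z * ψ - 1) / (1 - z)‖ ^ 2 ≤ (C + 1) ^ 2 := by
  rcases eq_or_ne z 1 with rfl | hz1
  · simp [sq_nonneg]
  have hpos : 0 < ‖z - 1‖ := norm_pos_iff.2 (sub_ne_zero.2 hz1)
  have hle : ‖(z * ψ - 1) / (1 - z)‖ ≤ C + 1 := by
    rw [norm_div, norm_sub_rev 1 z, div_le_iff₀ hpos]
    calc ‖z * ψ - 1‖ = ‖z * (ψ - 1) + (z - 1)‖ := by ring_nf
      _ ≤ ‖ψ - 1‖ + ‖z - 1‖ := by
        refine (norm_add_le _ _).trans_eq ?_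
        rw [norm_mul, hz, one_mul]
      _ ≤ (C + 1) * ‖z - 1‖ := by linarith
  exact pow_le_pow_left₀ (norm_nonneg _) hle 2

lemma intervalIntegrable_invIntegrand_of_le {F : ℝ → ℂ} {C a b : ℝ}
    (hm : Measurable (invIntegrand F)) (hle : ∀ l, invIntegrand F l ≤ C) :
    IntervalIntegrable (invIntegrand F) volume a b :=
  intervalIntegrable_const.mono_fun' hm.aestronglyMeasurable
    (ae_of_all _ fun l => by simpa [invIntegrand] using hle l)

lemma tendsto_sigmaI2c_of_dominated {ι : Type*} {p : Filter ι} [p.IsCountablyGenerated]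
    {F : ι → ℝ → ℂ} {G : ℝ → ℂ} {C : ℝ} (hm : ∀ i, Measurable (invIntegrand (F i)))
    (hle : ∀ᶠ i in p, ∀ l, invIntegrand (F i) l ≤ C)
    (hlim : ∀ l, Tendsto (fun i => F i l) p (𝓝 (G l))) :
    Tendsto (fun i => sigmaI2c (F i)) p (𝓝 (sigmaI2c G)) := by
  refine Tendsto.const_mul _ (tendsto_integral_filter_of_dominated_convergence (fun _ => C)
    (Eventually.of_forall fun i => (hm i).aestronglyMeasurable) ?_ intervalIntegrable_const
    (ae_of_all _ fun l _ => ?_))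
  · filter_upwards [hle] with i hi
    exact ae_of_all _ fun l _ => by simpa [invIntegrand] using hi l
  · exact ((((hlim l).const_mul _).sub_const 1).div_const _).norm.pow 2

noncomputable def psiReg (γ r : ℝ) (z : ℂ) : ℂ :=
  (1 + z) / 2 * Complex.exp (γ * (z - 1) / (1 + z + r))

lemma psiK_eq_psiReg (γ : ℝ) (k : ℕ) : psiK γ k = psiReg γ (1 / k) := by
  funext z
  simp [psiK, psiReg]

lemma psiInfBdy_eq_psiReg (γ l : ℝ) :
    psiInfBdy γ l = psiReg γ 0 (Complex.exp (-Complex.I * l)) := by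
  set u := Complex.exp (-(l / 2 : ℝ) * Complex.I)
  set v := Complex.exp ((l / 2 : ℝ) * Complex.I)
  have huv : u * v = 1 := by rw [← Complex.exp_add]; simp
  have hz : Complex.exp (-Complex.I * l) = u ^ 2 := by
    rw [← Complex.exp_nat_mul]; push_cast; ring_nf
  -- with `u = e^{-iλ/2}`: `-i tan(λ/2) = (u - u⁻¹) / (u + u⁻¹) = (u² - 1) / (u² + 1)`
  have htan : -Complex.I * (Real.tan (l / 2) : ℂ) = (u ^ 2 - 1) / (1 + u ^ 2) := by
    have hI : -Complex.I * ((u - v) * Complex.I) = u - v := by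
      ring_nf; rw [Complex.I_sq]; ring
    rw [Complex.ofReal_tan, Complex.tan, Complex.sin, Complex.cos,
      div_div_div_cancel_right₀ two_ne_zero, ← mul_div_assoc, hI,
      ← mul_div_mul_left _ _ (Complex.exp_ne_zero _ : u ≠ 0)]
    congr 1
    · linear_combination -huv
    · linear_combination huv
  rw [psiInfBdy, psiReg, hz, Complex.ofReal_zero, add_zero,
    show -Complex.I * γ * Real.tan (l / 2) = γ * (-Complex.I * Real.tan (l / 2)) by ring,
    htan, mul_div_assoc]

lemma norm_psiReg_sub_one_le {γ r : ℝ} (hγ : 0 ≤ γ) (hr : 0 ≤ r) {z : ℂ} (hz : ‖z‖ = 1) :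
    ‖psiReg γ r z - 1‖ ≤ (γ + 1 / 2) * ‖z - 1‖ := by
  set d : ℂ := 1 + z + r
  set w : ℂ := γ * (z - 1) / d
  have hre : z.re ≤ 1 := hz ▸ Complex.re_le_norm z
  have hcircle : z.re ^ 2 + z.im ^ 2 = 1 := by
    have := Complex.normSq_eq_norm_sq z
    rw [hz, Complex.normSq_apply] at this
    linarith
  -- on the unit circle `Re((z - 1) · conj d) = r (Re z - 1) ≤ 0`
  have hw : w.re ≤ 0 := by
    rw [Complex.div_re, ← add_div]
    refine div_nonpos_of_nonpos_of_nonneg ?_ (Complex.normSq_nonneg _)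
    simp only [d, Complex.mul_re, Complex.mul_im, Complex.add_re, Complex.add_im, Complex.sub_re,
      Complex.sub_im, Complex.ofReal_re, Complex.ofReal_im, Complex.one_re, Complex.one_im]
    nlinarith [mul_nonneg hγ hr]
  have hd : ‖1 + z‖ ≤ ‖d‖ := by
    rw [← sq_le_sq₀ (norm_nonneg _) (norm_nonneg _), ← Complex.normSq_eq_norm_sq,
      ← Complex.normSq_eq_norm_sq, Complex.normSq_apply, Complex.normSq_apply]
    simp only [d, Complex.add_re, Complex.add_im, Complex.ofReal_re, Complex.ofReal_im,
      Complex.one_re, Complex.one_im]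
    nlinarith [abs_le.1 (hz ▸ Complex.abs_re_le_norm z)]
  calc ‖psiReg γ r z - 1‖ = ‖(1 + z) / 2 * (Complex.exp w - 1) + (z - 1) / 2‖ := by
        rw [psiReg]; congr 1; ring
    _ ≤ ‖1 + z‖ / 2 * ‖Complex.exp w - 1‖ + ‖z - 1‖ / 2 := by
        refine (norm_add_le _ _).trans_eq ?_
        simp
    _ ≤ ‖1 + z‖ / 2 * (2 * ‖w‖) + ‖z - 1‖ / 2 := by
        gcongr
        exact Complex.norm_exp_sub_one_le_of_re_nonpos hw
    _ = ‖1 + z‖ / ‖d‖ * (γ * ‖z - 1‖) + ‖z - 1‖ / 2 := by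
        simp only [w, norm_div, norm_mul, Complex.norm_real, Real.norm_of_nonneg hγ]
        ring
    _ ≤ 1 * (γ * ‖z - 1‖) + ‖z - 1‖ / 2 := by
        gcongr
        exact div_le_one_of_le₀ hd (norm_nonneg _)
    _ = (γ + 1 / 2) * ‖z - 1‖ := by ring

lemma tendsto_psiReg_nhds_zero (γ : ℝ) (z : ℂ) :
    Tendsto (fun r => psiReg γ r z) (𝓝 0) (𝓝 (psiReg γ 0 z)) := by
  rcases eq_or_ne (1 + z) 0 with hz | hz
  · simp only [psiReg, hz, zero_div, zero_mul, tendsto_const_nhds]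
  · exact ContinuousAt.tendsto (ContinuousAt.mul continuousAt_const
      (Complex.continuous_exp.continuousAt.comp (ContinuousAt.div continuousAt_const
        (by fun_prop) (by simpa using hz))))

lemma measurable_invIntegrand_psiReg (γ r : ℝ) :
    Measurable (invIntegrand fun l => psiReg γ r (Complex.exp (-Complex.I * l))) := by
  unfold invIntegrand psiReg
  fun_prop

/-- The retailer's inventory variance is continuous along the ε-optimal sequence:
`σ_I²(ψ^(k)) → σ_I²(ψ^∞)` as `k → ∞`, and both quantities are finite (the defining
integrands are integrable on `(−π, π)`). -/
theorem stmt_19 (γ : ℝ) (hγ : 0 < γ) :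
    (∀ k : ℕ, 1 ≤ k → IntervalIntegrable
      (invIntegrand (fun l => psiK γ k (Complex.exp (-Complex.I * l)))) volume
      (-Real.pi) Real.pi) ∧
    IntervalIntegrable (invIntegrand (psiInfBdy γ)) volume (-Real.pi) Real.pi ∧
    Filter.Tendsto
      (fun k : ℕ => sigmaI2c (fun l => psiK γ k (Complex.exp (-Complex.I * l))))
      Filter.atTop (nhds (sigmaI2c (psiInfBdy γ))) := by
  have hle (r : ℝ) (hr : 0 ≤ r) (l : ℝ) :
      invIntegrand (fun l => psiReg γ r (Complex.exp (-Complex.I * l))) l ≤ (γ + 1 / 2 + 1) ^ 2 :=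
    sq_norm_div_one_sub_le (norm_exp_neg_I_mul l)
      (norm_psiReg_sub_one_le hγ.le hr (norm_exp_neg_I_mul l))
  rw [show psiInfBdy γ = _ from funext (psiInfBdy_eq_psiReg γ)]
  simp only [psiK_eq_psiReg]
  refine ⟨fun k _ => intervalIntegrable_invIntegrand_of_le (measurable_invIntegrand_psiReg γ _)
      (hle _ (by positivity)),
    intervalIntegrable_invIntegrand_of_le (measurable_invIntegrand_psiReg γ 0) (hle 0 le_rfl),
    tendsto_sigmaI2c_of_dominated (fun k => measurable_invIntegrand_psiReg γ _)
      (Eventually.of_forall fun k => hle _ (by positivity)) fun l => ?_⟩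
  exact (tendsto_psiReg_nhds_zero γ _).comp tendsto_one_div_atTop_nhds_zero_nat
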